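/- There exist a constant C > 0 and an integer N such that for all n ≥ N, |σ_n² − 2n/27 − 8/81| ≤ C·n²/2^n; i.e., the variance of the number of summands in Kentucky-2 legal decompositions of integers in [0, a(2n+1)) equals 2n/27 + 8/81 + O(n²/2^n). -/

import Mathlib

open scoped Classical

/-- A finite set `S` of positive integers is Kentucky-2 legal if for all distinct
`i, j ∈ S` we have `|⌈i/2⌉ - ⌈j/2⌉| ≥ 2`. -/
def KLegal (S : Finset ℕ) : Prop :=
  (∀ i ∈ S, 1 ≤ i) ∧
  ∀ i ∈ S, ∀ j ∈ S, i ≠ j → 2 ≤ |(((i + 1) / 2 : ℕ) : ℤ) - (((j + 1) / 2 : ℕ) : ℤ)|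

/-- `p n k` is the number of Kentucky-2 legal subsets of `{1,…,2n}` of cardinality `k`. -/
noncomputable def p (n k : ℕ) : ℕ :=
  ((Finset.Icc 1 (2 * n)).powerset.filter (fun S => KLegal S ∧ S.card = k)).card

/-- `μ n = (Σ_{k≥0} k * p n k) / (Σ_{k≥0} p n k)`. -/
noncomputable def mu (n : ℕ) : ℝ :=
  (∑' k : ℕ, (k : ℝ) * (p n k : ℝ)) / (∑' k : ℕ, (p n k : ℝ))

/-- `σ² n = (Σ_{k≥0} k² * p n k) / (Σ_{k≥0} p n k) - (μ n)²`, the variance of the number of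
summands in the Kentucky-2 legal decompositions of integers in `[0, a (2n+1))`. -/
noncomputable def sigmaSq (n : ℕ) : ℝ :=
  (∑' k : ℕ, (k : ℝ) ^ 2 * (p n k : ℝ)) / (∑' k : ℕ, (p n k : ℝ)) - (mu n) ^ 2

lemma two_le_abs_iff (a b : ℤ) : 2 ≤ |a - b| ↔ a + 2 ≤ b ∨ b + 2 ≤ a := by
  rw [le_abs]; omega

lemma p_zero (n : ℕ) : p n 0 = 1 := by
  unfold p
  convert Finset.card_singleton (∅ : Finset ℕ)
  ext S
  simp only [Finset.mem_filter, Finset.mem_powerset, Finset.mem_singleton, Finset.card_eq_zero]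
  constructor
  · rintro ⟨-, -, h⟩; exact h
  · rintro rfl
    exact ⟨Finset.empty_subset _, ⟨⟨fun i hi => absurd hi (by simp), fun i hi => absurd hi (by simp)⟩, rfl⟩⟩

lemma p_eq_zero {n k : ℕ} (h : n < k) : p n k = 0 := by
  unfold p
  rw [Finset.card_eq_zero, Finset.filter_eq_empty_iff]
  rintro S hS ⟨⟨h1, h2⟩, hcard⟩
  rw [Finset.mem_powerset] at hS
  have hle : S.card ≤ (Finset.Icc 1 n).card := by
    apply Finset.card_le_card_of_injOn (fun i => (i + 1) / 2)
    · intro i hi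
      have := hS hi
      simp only [Finset.coe_Icc, Set.mem_Icc, Finset.mem_Icc] at this ⊢
      omega
    · intro i hi j hj hij
      simp only at hij
      by_contra hne
      have := h2 i hi j hj hne
      rw [two_le_abs_iff] at this
      omega
  rw [Nat.card_Icc] at hle
  omega

lemma aux_card (n k x : ℕ) (hx1 : 1 ≤ x) (hx2 : x ≤ 2*n+4) (hbin : (x+1)/2 = n+2) :
    (((Finset.Icc 1 (2*n+4)).powerset.filter
        (fun S => (KLegal S ∧ S.card = k+1) ∧ x ∈ S)).card) = p n k := by
  unfold p
  refine Finset.card_bij' (fun S _ => S.erase x) (fun S _ => insert x S) ?_ ?_ ?_ ?_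
  · -- maps forward into target
    intro S hS
    simp only [Finset.mem_filter, Finset.mem_powerset] at hS ⊢
    obtain ⟨hsub, ⟨⟨hpos, hleg⟩, hcard⟩, hxS⟩ := hS
    refine ⟨?_, ⟨fun i hi => hpos i (Finset.mem_of_mem_erase hi), ?_⟩, ?_⟩
    · intro i hi
      have hne := Finset.ne_of_mem_erase hi
      have hiS := Finset.mem_of_mem_erase hi
      have h1 := hpos i hiS
      have h2 := Finset.mem_Icc.mp (hsub hiS)
      have h3 := hleg i hiS x hxS hne
      rw [two_le_abs_iff] at h3
      simp only [Finset.mem_Icc]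
      omega
    · intro i hi j hj hij
      exact hleg i (Finset.mem_of_mem_erase hi) j (Finset.mem_of_mem_erase hj) hij
    · rw [Finset.card_erase_of_mem hxS, hcard]; omega
  · -- maps backward into source
    intro S hS
    simp only [Finset.mem_filter, Finset.mem_powerset] at hS ⊢
    obtain ⟨hsub, ⟨hpos, hleg⟩, hcard⟩ := hS
    have hxnot : x ∉ S := by
      intro hxS
      have := Finset.mem_Icc.mp (hsub hxS)
      omega
    refine ⟨?_, ⟨⟨?_, ?_⟩, ?_⟩, Finset.mem_insert_self x S⟩
    · intro i hi
      rcases Finset.mem_insert.mp hi with rfl | hiS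
      · simp only [Finset.mem_Icc]; omega
      · have := Finset.mem_Icc.mp (hsub hiS)
        simp only [Finset.mem_Icc]; omega
    · intro i hi
      rcases Finset.mem_insert.mp hi with rfl | hiS
      · exact hx1
      · exact hpos i hiS
    · intro i hi j hj hij
      rcases Finset.mem_insert.mp hi with rfl | hiS <;>
        rcases Finset.mem_insert.mp hj with rfl | hjS
      · exact absurd rfl hij
      · have := Finset.mem_Icc.mp (hsub hjS)
        rw [two_le_abs_iff]; omega
      · have := Finset.mem_Icc.mp (hsub hiS)
        rw [two_le_abs_iff]; omega
      · exact hleg i hiS j hjS hij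
    · rw [Finset.card_insert_of_notMem hxnot, hcard]
  · -- left inverse
    intro S hS
    simp only [Finset.mem_filter] at hS
    exact Finset.insert_erase hS.2.2
  · -- right inverse
    intro S hS
    simp only [Finset.mem_filter, Finset.mem_powerset] at hS
    apply Finset.erase_insert
    intro hxS
    have := Finset.mem_Icc.mp (hS.1 hxS)
    omega

lemma p_rec (n k : ℕ) : p (n+2) (k+1) = p (n+1) (k+1) + 2 * p n k := by
  have h24 : 2*(n+2) = 2*n+4 := by ring
  set F := (Finset.Icc 1 (2*n+4)).powerset.filter
      (fun S => KLegal S ∧ S.card = k+1) with hF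
  have hpF : p (n+2) (k+1) = F.card := by unfold p; rw [h24]
  have key : F.card = (F.filter (fun S => (2*n+3) ∈ S ∨ (2*n+4) ∈ S)).card
      + (F.filter (fun S => ¬((2*n+3) ∈ S ∨ (2*n+4) ∈ S))).card :=
    (Finset.card_filter_add_card_filter_not _).symm
  have hnotboth : ∀ S ∈ F, ¬((2*n+3) ∈ S ∧ (2*n+4) ∈ S) := by
    rintro S hS ⟨h3, h4⟩
    simp only [hF, Finset.mem_filter, Finset.mem_powerset] at hS
    have := hS.2.1.2 (2*n+3) h3 (2*n+4) h4 (by omega)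
    rw [two_le_abs_iff] at this
    omega
  have hsplit : (F.filter (fun S => (2*n+3) ∈ S ∨ (2*n+4) ∈ S)).card
      = (F.filter (fun S => (2*n+3) ∈ S)).card + (F.filter (fun S => (2*n+4) ∈ S)).card := by
    rw [Finset.filter_or, Finset.card_union_of_disjoint]
    rw [Finset.disjoint_left]
    intro S hS1 hS2
    simp only [Finset.mem_filter] at hS1 hS2
    exact hnotboth S hS1.1 ⟨hS1.2, hS2.2⟩
  have h1 : (F.filter (fun S => (2*n+3) ∈ S)).card = p n k := by
    rw [hF, Finset.filter_filter]
    exact aux_card n k (2*n+3) (by omega) (by omega) (by omega)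
  have h2 : (F.filter (fun S => (2*n+4) ∈ S)).card = p n k := by
    rw [hF, Finset.filter_filter]
    exact aux_card n k (2*n+4) (by omega) (by omega) (by omega)
  have h0 : (F.filter (fun S => ¬((2*n+3) ∈ S ∨ (2*n+4) ∈ S))).card = p (n+1) (k+1) := by
    unfold p
    congr 1
    ext S
    simp only [hF, Finset.mem_filter, Finset.mem_powerset]
    constructor
    · rintro ⟨⟨hsub, hk⟩, hnot⟩
      push_neg at hnot
      refine ⟨?_, hk⟩
      intro i hi
      have := Finset.mem_Icc.mp (hsub hi)
      have hne3 : i ≠ 2*n+3 := fun h => hnot.1 (h ▸ hi)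
      have hne4 : i ≠ 2*n+4 := fun h => hnot.2 (h ▸ hi)
      simp only [Finset.mem_Icc]
      omega
    · rintro ⟨hsub, hk⟩
      have hb : ∀ i ∈ S, i ≤ 2*(n+1) := fun i hi => (Finset.mem_Icc.mp (hsub hi)).2
      refine ⟨⟨?_, hk⟩, ?_⟩
      · intro i hi
        have := Finset.mem_Icc.mp (hsub hi)
        simp only [Finset.mem_Icc]
        omega
      · push_neg
        constructor
        · intro h; have := hb _ h; omega
        · intro h; have := hb _ h; omega
  rw [hpF, key, hsplit, h0, h1, h2]
  ring

lemma p_one_one : p 1 1 = 2 := by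
  unfold p
  have hIcc : Finset.Icc 1 (2*1) = {1, 2} := rfl
  rw [hIcc]
  have : ({1, 2} : Finset ℕ).powerset.filter (fun S => KLegal S ∧ S.card = 1)
      = {{1}, {2}} := by
    ext S
    simp only [Finset.mem_filter, Finset.mem_powerset, Finset.mem_insert, Finset.mem_singleton]
    constructor
    · rintro ⟨hsub, -, hcard⟩
      obtain ⟨x, rfl⟩ := Finset.card_eq_one.mp hcard
      have hx := hsub (Finset.mem_singleton_self x)
      simp only [Finset.mem_insert, Finset.mem_singleton] at hx
      rcases hx with rfl | rfl
      · left; rfl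
      · right; rfl
    · rintro (rfl | rfl)
      · refine ⟨by intro i hi; simp at hi; simp [hi], ⟨?_, ?_⟩, rfl⟩
        · intro i hi; simp at hi; omega
        · intro i hi j hj hij; simp at hi hj; omega
      · refine ⟨by intro i hi; simp at hi; simp [hi], ⟨?_, ?_⟩, rfl⟩
        · intro i hi; simp at hi; omega
        · intro i hi j hj hij; simp at hi hj; omega
  rw [this]
  rfl

noncomputable def T (f : ℕ → ℝ) (n : ℕ) : ℝ := ∑ k ∈ Finset.range (n+1), f k * (p n k : ℝ)

lemma T_rec (f : ℕ → ℝ) (n : ℕ) :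
    T f (n+2) = T f (n+1) + 2 * T (fun k => f (k+1)) n := by
  have h1 : T f (n+2) = ∑ k ∈ Finset.range (n+2), f (k+1) * ((p (n+2) (k+1) : ℝ))
      + f 0 * (p (n+2) 0 : ℝ) := by
    rw [T]
    exact Finset.sum_range_succ' (fun k => f k * (p (n+2) k : ℝ)) (n+2)
  have h2 : ∀ k, ((p (n+2) (k+1) : ℝ)) = (p (n+1) (k+1) : ℝ) + 2 * (p n k : ℝ) := by
    intro k; exact_mod_cast congrArg (Nat.cast : ℕ → ℝ) (p_rec n k)
  have h3 : T f (n+1) = ∑ k ∈ Finset.range (n+1), f (k+1) * ((p (n+1) (k+1) : ℝ))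
      + f 0 * (p (n+1) 0 : ℝ) := by
    rw [T]
    exact Finset.sum_range_succ' (fun k => f k * (p (n+1) k : ℝ)) (n+1)
  rw [h1]
  have h4 : ∑ k ∈ Finset.range (n+2), f (k+1) * ((p (n+2) (k+1) : ℝ))
      = ∑ k ∈ Finset.range (n+2), (f (k+1) * (p (n+1) (k+1) : ℝ)
        + 2 * (f (k+1) * (p n k : ℝ))) := by
    apply Finset.sum_congr rfl
    intro k _
    rw [h2 k]; ring
  rw [h4, Finset.sum_add_distrib, ← Finset.mul_sum]
  rw [Finset.sum_range_succ (fun k => f (k+1) * (p (n+1) (k+1) : ℝ)) (n+1)]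
  rw [Finset.sum_range_succ (fun k => f (k+1) * (p n k : ℝ)) (n+1)]
  rw [p_eq_zero (show n < n+1 by omega), p_eq_zero (show n+1 < n+2 by omega)]
  rw [h3, p_zero, p_zero, T]
  push_cast
  ring

lemma T_eq_of (f g : ℕ → ℝ) (h : ∀ k, f k = g k) (n : ℕ) : T f n = T g n :=
  Finset.sum_congr rfl (fun k _ => by rw [h])

lemma T_add (f g : ℕ → ℝ) (n : ℕ) : T (fun k => f k + g k) n = T f n + T g n := by
  simp [T, add_mul, Finset.sum_add_distrib]

noncomputable def SA (n : ℕ) : ℝ := T (fun _ => 1) n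
noncomputable def SB (n : ℕ) : ℝ := T (fun k => (k : ℝ)) n
noncomputable def SC (n : ℕ) : ℝ := T (fun k => (k : ℝ)^2) n

lemma SA_rec (n : ℕ) : SA (n+2) = SA (n+1) + 2 * SA n := by
  rw [SA, T_rec]; rfl

lemma SB_rec (n : ℕ) : SB (n+2) = SB (n+1) + 2 * SB n + 2 * SA n := by
  rw [SB, T_rec]
  have h : T (fun k => ((k+1 : ℕ) : ℝ)) n = T (fun k => (k : ℝ)) n + T (fun _ => (1:ℝ)) n := by
    rw [← T_add]
    apply T_eq_of
    intro k; push_cast; ring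
  rw [h]
  simp only [SB, SA]
  ring

lemma SC_rec (n : ℕ) : SC (n+2) = SC (n+1) + 2 * SC n + 4 * SB n + 2 * SA n := by
  rw [SC, T_rec]
  have h : T (fun k : ℕ => ((k+1 : ℕ) : ℝ)^2) n
      = T (fun k => (k : ℝ)^2) n + T (fun k => 2*(k:ℝ) + 1) n := by
    rw [← T_add]
    apply T_eq_of
    intro k; push_cast; ring
  have h2 : T (fun k => 2*(k:ℝ) + 1) n = 2 * T (fun k => (k:ℝ)) n + T (fun _ => (1:ℝ)) n := by
    simp only [T, Finset.mul_sum]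
    rw [← Finset.sum_add_distrib]
    apply Finset.sum_congr rfl
    intro k _; ring
  rw [h, h2]
  simp only [SC, SB, SA]
  ring

lemma two_step {P : ℕ → Prop} (h0 : P 0) (h1 : P 1)
    (ih : ∀ n, P n → P (n+1) → P (n+2)) : ∀ n, P n := by
  intro n
  induction n using Nat.strong_induction_on with
  | _ n ih2 =>
    match n with
    | 0 => exact h0
    | 1 => exact h1
    | (m+2) => exact ih m (ih2 m (by omega)) (ih2 (m+1) (by omega))

lemma SA0 : SA 0 = 1 := by simp [SA, T, p_zero]
lemma SA1 : SA 1 = 3 := by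
  rw [SA, T]
  rw [Finset.sum_range_succ, Finset.sum_range_one, p_zero, p_one_one]
  norm_num
lemma SB0 : SB 0 = 0 := by simp [SB, T]
lemma SB1 : SB 1 = 2 := by
  rw [SB, T, Finset.sum_range_succ, Finset.sum_range_one, p_one_one]
  norm_num
lemma SC0 : SC 0 = 0 := by simp [SC, T]
lemma SC1 : SC 1 = 2 := by
  rw [SC, T, Finset.sum_range_succ, Finset.sum_range_one, p_one_one]
  norm_num

lemma closed_forms : ∀ n : ℕ,
    SA n = (4 * 2^n - (-1 : ℝ)^n) / 3 ∧
    SB n = ((12*(n:ℝ)+8) * 2^n - (6*(n:ℝ)+8) * (-1 : ℝ)^n) / 27 ∧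
    SC n = ((12*(n:ℝ)^2+24*(n:ℝ)+16) * 2^n - (12*(n:ℝ)^2+30*(n:ℝ)+16) * (-1 : ℝ)^n) / 81 := by
  apply two_step
  · refine ⟨?_, ?_, ?_⟩ <;> simp [SA0, SB0, SC0] <;> norm_num
  · refine ⟨?_, ?_, ?_⟩ <;> simp [SA1, SB1, SC1] <;> norm_num
  · rintro n ⟨hA0, hB0, hC0⟩ ⟨hA1, hB1, hC1⟩
    have hp2 : (2 : ℝ)^(n+2) = 4 * 2^n := by ring
    have hp1 : (2 : ℝ)^(n+1) = 2 * 2^n := by ring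
    have hm2 : (-1 : ℝ)^(n+2) = (-1:ℝ)^n := by ring
    have hm1 : (-1 : ℝ)^(n+1) = -(-1:ℝ)^n := by ring
    refine ⟨?_, ?_, ?_⟩
    · rw [SA_rec, hA1, hA0, hp2, hp1, hm2, hm1]; ring
    · rw [SB_rec, hB1, hB0, hA0, hp2, hp1, hm2, hm1]; push_cast; ring
    · rw [SC_rec, hC1, hC0, hB0, hA0, hp2, hp1, hm2, hm1]; push_cast; ring

lemma tsum_T (f : ℕ → ℝ) (n : ℕ) : ∑' k : ℕ, f k * (p n k : ℝ) = T f n := by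
  rw [T]
  apply tsum_eq_sum
  intro k hk
  rw [Finset.mem_range, not_lt] at hk
  rw [p_eq_zero (show n < k by omega)]
  simp

lemma tsum_A (n : ℕ) : ∑' k : ℕ, (p n k : ℝ) = SA n := by
  rw [SA, ← tsum_T (fun _ => 1) n]
  apply tsum_congr
  intro k; ring

lemma sigmaSq_eq (n : ℕ) : sigmaSq n = SC n / SA n - (SB n / SA n)^2 := by
  rw [sigmaSq, mu, tsum_A, tsum_T (fun k => (k:ℝ)) n, tsum_T (fun k => (k:ℝ)^2) n, SB, SC]

set_option maxHeartbeats 1000000 in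
lemma key_alg (q ev x A B C : ℝ) (hq : 1 ≤ q) (hx : 1 ≤ x) (hev : ev = 1 ∨ ev = -1)
    (hA : A = (4*q - ev)/3) (hB : B = ((12*x+8)*q - (6*x+8)*ev)/27)
    (hC : C = ((12*x^2+24*x+16)*q - (12*x^2+30*x+16)*ev)/81) :
    |C/A - (B/A)^2 - 2*x/27 - 8/81| ≤ x^2 / q := by
  have hq0 : 0 < q := by linarith
  have hAq : q ≤ A := by rcases hev with rfl | rfl <;> rw [hA] <;> linarith
  have hA0 : 0 < A := lt_of_lt_of_le hq0 hAq
  have hAne : A ≠ 0 := ne_of_gt hA0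
  have key : C/A - (B/A)^2 - 2*x/27 - 8/81
      = (-(ev*q)*(12*x^2+32*x+16) - (4*x+8)) / (243 * A^2) := by
    subst hB hC
    rcases hev with rfl | rfl
    · rw [eq_div_iff (by positivity)]
      field_simp
      subst hA
      have hne : (4*q - 1 : ℝ) ≠ 0 := ne_of_gt (by linarith)
      ring
    · rw [eq_div_iff (by positivity)]
      field_simp
      subst hA
      have hne : (4*q - (-1) : ℝ) ≠ 0 := ne_of_gt (by linarith)
      ring
  rw [key, abs_div]
  have hA20 : (0:ℝ) < A^2 := pow_pos hA0 2
  have h2430 : (0:ℝ) < 243 * A^2 := by linarith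
  have h243 : |(243 : ℝ) * A^2| = 243 * A^2 := abs_of_pos h2430
  rw [h243]
  have hc0 : (0:ℝ) ≤ 12*x^2+32*x+16 := by nlinarith
  have hEbound : |(-(ev*q)*(12*x^2+32*x+16) - (4*x+8))| ≤ q*(12*x^2+32*x+16) + (4*x+8) := by
    have h1 : |(-(ev*q)*(12*x^2+32*x+16))| = q*(12*x^2+32*x+16) := by
      rcases hev with rfl | rfl
      · have h2 : -((1:ℝ)*q)*(12*x^2+32*x+16) = -(q*(12*x^2+32*x+16)) := by ring
        rw [h2, abs_neg, abs_of_nonneg (by nlinarith)]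
      · have h2 : -((-1:ℝ)*q)*(12*x^2+32*x+16) = q*(12*x^2+32*x+16) := by ring
        rw [h2, abs_of_nonneg (by nlinarith)]
    calc |(-(ev*q)*(12*x^2+32*x+16) - (4*x+8))|
        ≤ |(-(ev*q)*(12*x^2+32*x+16))| + |(4*x+8)| := abs_sub _ _
      _ ≤ q*(12*x^2+32*x+16) + (4*x+8) := by
          rw [h1, abs_of_nonneg (by linarith)]
  rw [div_le_div_iff₀ h2430 hq0]
  have hqq : q ≤ q^2 := by nlinarith
  have hA2 : q^2 ≤ A^2 := by nlinarith
  have step1 : |(-(ev*q)*(12*x^2+32*x+16) - (4*x+8))| * q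
      ≤ (q*(12*x^2+32*x+16) + (4*x+8)) * q :=
    mul_le_mul_of_nonneg_right hEbound (le_of_lt hq0)
  have step2 : (q*(12*x^2+32*x+16) + (4*x+8)) * q ≤ x^2 * (243*A^2) := by
    nlinarith [mul_nonneg (sq_nonneg q) (show (0:ℝ) ≤ 48*x^2 - 32*x - 16 by nlinarith),
      mul_nonneg (le_of_lt hq0) (show (0:ℝ) ≤ 12*x^2 - 4*x - 8 by nlinarith),
      mul_le_mul_of_nonneg_right hqq (show (0:ℝ) ≤ 12*x^2 by positivity),
      mul_le_mul_of_nonneg_right hA2 (sq_nonneg x),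
      mul_nonneg (sq_nonneg q) (sq_nonneg x)]
  calc |(-(ev*q)*(12*x^2+32*x+16) - (4*x+8))| * q
      ≤ (q*(12*x^2+32*x+16) + (4*x+8)) * q := step1
    _ ≤ x^2 * (243*A^2) := step2

/-- `σ² n = 2n/27 + 8/81 + O(n² / 2^n)`. -/
theorem kentucky_variance_asymptotic :
    ∃ C : ℝ, 0 < C ∧ ∃ N : ℕ, ∀ n : ℕ, N ≤ n →
      |sigmaSq n - 2 * (n : ℝ) / 27 - 8 / 81| ≤ C * n ^ 2 / 2 ^ n := by
  refine ⟨1, one_pos, 1, fun n hn => ?_⟩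
  obtain ⟨hA, hB, hC⟩ := closed_forms n
  have hq : (1:ℝ) ≤ 2^n := one_le_pow₀ (by norm_num : (1:ℝ) ≤ 2)
  have hx : (1:ℝ) ≤ (n:ℝ) := by exact_mod_cast hn
  have hev : ((-1:ℝ))^n = 1 ∨ ((-1:ℝ))^n = -1 := by
    rcases Nat.even_or_odd n with h | h
    · exact Or.inl h.neg_one_pow
    · exact Or.inr h.neg_one_pow
  rw [sigmaSq_eq, one_mul]
  exact key_alg (2^n) ((-1:ℝ)^n) (n:ℝ) (SA n) (SB n) (SC n) hq hx hev hA hB hC
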